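/- For every n ≥ 1 and x ∈ [0,1], the ratio of the fourth to the second central moment of the Kantorovich operator satisfies K_n((t−x)^4;x) / K_n((t−x)^2;x) ≤ 3(n+2)/(n+1)^2. -/

import Mathlib

open MeasureTheory Set

noncomputable def kantorovich (n : ℕ) (f : ℝ → ℝ) (x : ℝ) : ℝ :=
  ((n : ℝ) + 1) * ∑ k ∈ Finset.range (n + 1),
    (n.choose k : ℝ) * x ^ k * (1 - x) ^ (n - k) *
      ∫ t in ((k : ℝ) / ((n : ℝ) + 1))..(((k : ℝ) + 1) / ((n : ℝ) + 1)), f t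

noncomputable def supNorm (f : ℝ → ℝ) : ℝ :=
  sSup {y | ∃ x ∈ Icc (0:ℝ) 1, y = |f x|}

noncomputable def omega1 (f : ℝ → ℝ) (h : ℝ) : ℝ :=
  sSup {d | ∃ s ∈ Icc (0:ℝ) 1, ∃ t ∈ Icc (0:ℝ) 1, |s - t| ≤ h ∧ d = |f s - f t|}

noncomputable def omega2 (f : ℝ → ℝ) (h : ℝ) : ℝ :=
  sSup {d | ∃ t δ : ℝ, 0 < δ ∧ δ ≤ h ∧ t - δ ∈ Icc (0:ℝ) 1 ∧ t + δ ∈ Icc (0:ℝ) 1 ∧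
    d = |f (t + δ) - 2 * f t + f (t - δ)|}

/-!
On the cell `[k/(n+1), (k+1)/(n+1)]` the average of `(t - x) ^ p` is a polynomial in `k`; written
in the falling-factorial basis `k.descFactorial j`, the Kantorovich operator turns it into a
combination of the binomial sums `∑ₖ C(n,k) k^{(j)} xᵏ (1-x)ⁿ⁻ᵏ = n^{(j)} xʲ`. This gives both
central moments in closed form, and with `X = x(1-x) ∈ [0, 1/4]` the claim becomes a polynomial
inequality in `n` and `X`.
-/

open Finset

theorem Nat.cast_descFactorial_succ {R : Type*} [Ring R] (k j : ℕ) :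
    (k.descFactorial (j + 1) : R) = k.descFactorial j * (k - j) := by
  simp only [← descPochhammer_eval_eq_descFactorial, descPochhammer_succ_eval]

theorem Nat.choose_mul_descFactorial {n k j : ℕ} (hjk : j ≤ k) :
    n.choose k * k.descFactorial j = n.descFactorial j * (n - j).choose (k - j) := by
  rw [descFactorial_eq_factorial_mul_choose, descFactorial_eq_factorial_mul_choose,
    mul_left_comm, choose_mul hjk, mul_assoc]

theorem sum_range_choose_mul_descFactorial_mul_pow_mul_pow {R : Type*} [CommSemiring R]
    (n j : ℕ) (x y : R) :
    ∑ k ∈ range (n + 1), (n.choose k : R) * k.descFactorial j * x ^ k * y ^ (n - k)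
      = n.descFactorial j * x ^ j * (x + y) ^ (n - j) := by
  rcases lt_or_ge n j with hnj | hjn
  · rw [Nat.descFactorial_of_lt hnj, Nat.cast_zero, zero_mul, zero_mul]
    refine sum_eq_zero fun k hk => ?_
    rw [Nat.descFactorial_of_lt (show k < j by grind), Nat.cast_zero, mul_zero, zero_mul,
      zero_mul]
  obtain ⟨m, rfl⟩ := Nat.exists_eq_add_of_le hjn
  have hlow : ∀ k ∈ range j,
      ((j + m).choose k : R) * k.descFactorial j * x ^ k * y ^ (j + m - k) = 0 := by
    intro k hk
    rw [Nat.descFactorial_of_lt (mem_range.1 hk), Nat.cast_zero, mul_zero, zero_mul, zero_mul]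
  rw [add_assoc, sum_range_add, sum_eq_zero hlow, zero_add, Nat.add_sub_cancel_left, add_pow,
    mul_sum]
  refine sum_congr rfl fun i _ => ?_
  rw [← Nat.cast_mul, Nat.choose_mul_descFactorial (Nat.le_add_right j i), Nat.cast_mul,
    Nat.add_sub_cancel_left, Nat.add_sub_cancel_left, Nat.add_sub_add_left, pow_add]
  ring

theorem sum_range_choose_mul_descFactorial_mul_pow_mul_one_sub_pow {R : Type*} [CommRing R]
    (n j : ℕ) (x : R) :
    ∑ k ∈ range (n + 1), (n.choose k : R) * k.descFactorial j * x ^ k * (1 - x) ^ (n - k)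
      = n.descFactorial j * x ^ j := by
  simp [sum_range_choose_mul_descFactorial_mul_pow_mul_pow]

theorem kantorovich_eq_sum_descFactorial {m : ℕ} (n : ℕ) (f : ℝ → ℝ) (x : ℝ) (c : Fin m → ℝ)
    (hf : ∀ k : ℕ, ((n : ℝ) + 1) *
        ∫ t in ((k : ℝ) / ((n : ℝ) + 1))..(((k : ℝ) + 1) / ((n : ℝ) + 1)), f t
      = ∑ j, c j * k.descFactorial j) :
    kantorovich n f x = ∑ j, c j * n.descFactorial j * x ^ (j : ℕ) := by
  simp_rw [kantorovich, mul_sum, mul_left_comm ((n : ℝ) + 1), hf, mul_sum]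
  rw [sum_comm]
  refine sum_congr rfl fun j _ => ?_
  rw [mul_assoc, ← sum_range_choose_mul_descFactorial_mul_pow_mul_one_sub_pow, mul_sum]
  exact sum_congr rfl fun k _ => by ring

theorem integral_sub_pow (p : ℕ) (x a b : ℝ) :
    ∫ t in a..b, (t - x) ^ p = ((b - x) ^ (p + 1) - (a - x) ^ (p + 1)) / (p + 1) := by
  rw [intervalIntegral.integral_comp_sub_right (· ^ p) x, integral_pow]

theorem kantorovich_sub_sq (n : ℕ) (x : ℝ) :
    kantorovich n (fun t => (t - x) ^ 2) x
      = (((n : ℝ) - 1) * x * (1 - x) + 1 / 3) / ((n : ℝ) + 1) ^ 2 := by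
  refine (kantorovich_eq_sum_descFactorial n _ x
    ![x ^ 2 - x / (n + 1) + 1 / (3 * (n + 1) ^ 2), 2 / (n + 1) ^ 2 - 2 * x / (n + 1),
      1 / (n + 1) ^ 2] fun k => ?_).trans ?_ <;>
  simp only [integral_sub_pow, Fin.sum_univ_succ, Fin.sum_univ_zero, Fin.val_zero, Fin.val_succ,
    Matrix.cons_val_zero, Matrix.cons_val_succ, Nat.cast_descFactorial_succ,
    Nat.descFactorial_zero] <;>
  push_cast <;> field_simp <;> ring

theorem kantorovich_sub_pow_four (n : ℕ) (x : ℝ) :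
    kantorovich n (fun t => (t - x) ^ 4) x
      = (3 * (n : ℝ) ^ 2 * x ^ 2 * (1 - x) ^ 2 + 5 * n * x * (1 - x) * (1 - 2 * x) ^ 2
          + x ^ 4 - 2 * x ^ 3 + 2 * x ^ 2 - x + 1 / 5) / ((n : ℝ) + 1) ^ 4 := by
  refine (kantorovich_eq_sum_descFactorial n _ x
    ![x ^ 4 - 2 * x ^ 3 / (n + 1) + 2 * x ^ 2 / (n + 1) ^ 2 - x / (n + 1) ^ 3
        + 1 / (5 * (n + 1) ^ 4),
      6 / (n + 1) ^ 4 - 14 * x / (n + 1) ^ 3 + 12 * x ^ 2 / (n + 1) ^ 2 - 4 * x ^ 3 / (n + 1),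
      15 / (n + 1) ^ 4 - 18 * x / (n + 1) ^ 3 + 6 * x ^ 2 / (n + 1) ^ 2,
      8 / (n + 1) ^ 4 - 4 * x / (n + 1) ^ 3,
      1 / (n + 1) ^ 4] fun k => ?_).trans ?_ <;>
  simp only [integral_sub_pow, Fin.sum_univ_succ, Fin.sum_univ_zero, Fin.val_zero, Fin.val_succ,
    Matrix.cons_val_zero, Matrix.cons_val_succ, Nat.cast_descFactorial_succ,
    Nat.descFactorial_zero] <;>
  push_cast <;> field_simp <;> ring

theorem fourth_moment_numerator_le {N X : ℝ} (hN : 0 ≤ N) (hX₀ : 0 ≤ X) (hX : X ≤ 1 / 4) :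
    3 * N ^ 2 * X ^ 2 + 5 * N * X * (1 - 4 * X) + X ^ 2 - X + 1 / 5
      ≤ 3 * (N + 2) * ((N - 1) * X + 1 / 3) := by
  have hX₁ : 0 ≤ 1 - X := by linarith
  -- RHS - LHS = 3N²X(1-X) + N(1 - 2X + 20X²) + (9/5 - 5X - X²), each term nonnegative
  nlinarith [mul_nonneg (mul_nonneg (sq_nonneg N) hX₀) hX₁, mul_nonneg hN (sq_nonneg X)]

theorem kantorovich_fourth_to_second_moment_ratio_general (n : ℕ) (x : ℝ)
    (hx : x ∈ Icc (0:ℝ) 1) :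
    kantorovich n (fun t => (t - x) ^ 4) x / kantorovich n (fun t => (t - x) ^ 2) x
      ≤ 3 * ((n : ℝ) + 2) / ((n : ℝ) + 1) ^ 2 := by
  obtain ⟨hx₀, hx₁⟩ := hx
  have hX₀ : 0 ≤ x * (1 - x) := mul_nonneg hx₀ (sub_nonneg.2 hx₁)
  have hX : x * (1 - x) ≤ 1 / 4 := by nlinarith [sq_nonneg (1 - 2 * x)]
  have hK₂ : 0 < ((n : ℝ) - 1) * x * (1 - x) + 1 / 3 := by nlinarith
  have hnum := fourth_moment_numerator_le (Nat.cast_nonneg n) hX₀ hX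
  rw [kantorovich_sub_sq, kantorovich_sub_pow_four, div_le_iff₀ (div_pos hK₂ (by positivity))]
  calc _ ≤ 3 * ((n : ℝ) + 2) * (((n : ℝ) - 1) * x * (1 - x) + 1 / 3) / ((n : ℝ) + 1) ^ 4 := by
        gcongr
        linear_combination hnum
    _ = _ := by field_simp

theorem kantorovich_fourth_to_second_moment_ratio (n : ℕ) (hn : 1 ≤ n) (x : ℝ)
    (hx : x ∈ Icc (0:ℝ) 1) :
    kantorovich n (fun t => (t - x) ^ 4) x / kantorovich n (fun t => (t - x) ^ 2) x
      ≤ 3 * ((n : ℝ) + 2) / ((n : ℝ) + 1) ^ 2 :=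
  kantorovich_fourth_to_second_moment_ratio_general n x hx
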